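/- Let g : ℝ → ℝ be continuous with compact support contained in [a, b], and let φ₀ : ℝ → ℝ solve φ₀'' = 0 (i.e. φ₀ is affine). Define recursively φ_{n}(t) = −∫_ℝ g(s) φ_{n−1}(s) Θ(t − s) ds with Θ(x) = x·θ(x). Then for every compact K ⊂ ℝ the series Σ_{n≥0} φ_n converges uniformly on K, and the sum φ = Σ_{n≥0} φ_n is a C² function solving φ''(t) + g(t) φ(t) = 0 for all t, with φ(t) = φ₀(t) for all t ≤ a. -/

import Mathlib

/-!
For `f` continuous and vanishing left of `a`, the retarded integral is
`R f t = ∫_a^t f(s) (t - s) ds`, so `(R f)' t = ∫_a^t f`, `(R f)'' = f` and `R f = 0` on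
`(-∞, a]`. Hence every `φ (n+1)` vanishes left of `a`, and on `[a, T]` only `s ∈ [a, t]` with
`0 ≤ t - s ≤ T - a` contributes, so induction gives the Volterra bound
`|φ n t| ≤ C (M (T - a))ⁿ (t - a)ⁿ / n!` with `M = sup |g|` and `C = sup_{[a, T]} |φ₀|`.
The exponential majorant gives locally uniform convergence (M-test) and lets the sum pass
through `R` (dominated convergence); thus `Φ = φ₀ - R (g Φ)`, which is `C²` with
`Φ'' = -g Φ` and equals `φ₀` left of `a`.
-/

open MeasureTheory Filter intervalIntegral Set

/-- `R f t = ∫ f(s) Θ(t - s) ds` with `Θ(x) = x θ(x)`, the retarded fundamental solution of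
`d²/dt²` applied to `f`. -/
noncomputable def retardedIntegral (f : ℝ → ℝ) (t : ℝ) : ℝ :=
  ∫ s : ℝ, f s * (if 0 ≤ t - s then t - s else 0)

section RetardedIntegral

variable {f : ℝ → ℝ} {a : ℝ}

theorem retardedIntegral_eq_zero_of_le (hfa : ∀ s < a, f s = 0) {t : ℝ} (ht : t ≤ a) :
    retardedIntegral f t = 0 := by
  have hzero : ∀ s, f s * (if 0 ≤ t - s then t - s else 0) = 0 := by
    intro s
    rcases lt_or_ge s a with hsa | has
    · rw [hfa s hsa, zero_mul]
    · split_ifs with hts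
      · rw [le_antisymm (by linarith) hts, mul_zero]
      · rw [mul_zero]
  simp only [retardedIntegral, hzero, integral_zero]

theorem retardedIntegral_eq_intervalIntegral (hfa : ∀ s < a, f s = 0) (t : ℝ) :
    retardedIntegral f t = ∫ s in a..t, f s * (t - s) := by
  rcases le_or_gt a t with hat | hta
  · have hzero : ∀ s ∉ Icc a t, f s * (if 0 ≤ t - s then t - s else 0) = 0 := by
      intro s hs
      rcases lt_or_ge s a with hsa | has
      · rw [hfa s hsa, zero_mul]
      · have hts : ¬ 0 ≤ t - s := fun h => hs ⟨has, by linarith⟩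
        rw [if_neg hts, mul_zero]
    rw [retardedIntegral, ← setIntegral_eq_integral_of_forall_compl_eq_zero hzero,
      integral_Icc_eq_integral_Ioc, ← integral_of_le hat]
    refine integral_congr fun s hs => ?_
    rw [uIcc_of_le hat] at hs
    simp only [if_pos (sub_nonneg.2 hs.2)]
  · rw [retardedIntegral_eq_zero_of_le hfa hta.le, integral_of_ge hta.le,
      integral_Ioc_eq_integral_Ioo, setIntegral_congr_fun measurableSet_Ioo
        (g := fun _ => 0) fun s hs => by rw [hfa s hs.2, zero_mul]]
    simp

theorem hasDerivAt_retardedIntegral (hf : Continuous f) (hfa : ∀ s < a, f s = 0) (t : ℝ) :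
    HasDerivAt (retardedIntegral f) (∫ s in a..t, f s) t := by
  have hsplit :
      retardedIntegral f = fun u => (∫ s in a..u, f s) * u - ∫ s in a..u, f s * s := by
    funext u
    rw [retardedIntegral_eq_intervalIntegral hfa, ← intervalIntegral.integral_mul_const]
    simp only [mul_sub]
    exact integral_sub ((hf.mul continuous_const).intervalIntegrable _ _)
      ((hf.mul continuous_id).intervalIntegrable _ _)
  rw [hsplit]
  exact (((hf.integral_hasStrictDerivAt a t).hasDerivAt.mul (hasDerivAt_id t)).sub
    ((hf.mul continuous_id).integral_hasStrictDerivAt a t).hasDerivAt).congr_deriv (by simp)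

theorem contDiff_two_retardedIntegral (hf : Continuous f) (hfa : ∀ s < a, f s = 0) :
    ContDiff ℝ 2 (retardedIntegral f) := by
  have hderiv : deriv (retardedIntegral f) = fun t => ∫ s in a..t, f s :=
    funext fun t => (hasDerivAt_retardedIntegral hf hfa t).deriv
  rw [show (2 : WithTop ℕ∞) = 1 + 1 from rfl, contDiff_succ_iff_deriv, hderiv,
    contDiff_one_iff_deriv]
  refine ⟨fun t => (hasDerivAt_retardedIntegral hf hfa t).differentiableAt, by simp,
    fun t => (hf.integral_hasStrictDerivAt a t).hasDerivAt.differentiableAt, ?_⟩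
  rw [funext (Continuous.deriv_integral f hf a)]
  exact hf

theorem deriv_deriv_affine_sub_retardedIntegral (hf : Continuous f) (hfa : ∀ s < a, f s = 0)
    (c d t : ℝ) : deriv (deriv fun u => c + d * u - retardedIntegral f u) t = -f t := by
  have hderiv : deriv (fun u => c + d * u - retardedIntegral f u) =
      fun u => d - ∫ s in a..u, f s :=
    funext fun u => ((((hasDerivAt_id u).const_mul d).const_add c).sub
      (hasDerivAt_retardedIntegral hf hfa u)).deriv.trans (by simp)
  rw [hderiv]
  exact ((hf.integral_hasStrictDerivAt a t).hasDerivAt.const_sub d).deriv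

end RetardedIntegral

section VolterraIteration

variable {g : ℝ → ℝ} {a M : ℝ} {φ : ℕ → ℝ → ℝ}

theorem iterate_succ_eq_zero_of_le (hga : ∀ s < a, g s = 0)
    (hrec : ∀ n t, φ (n + 1) t = -retardedIntegral (fun s => g s * φ n s) t)
    (n : ℕ) {t : ℝ} (ht : t ≤ a) : φ (n + 1) t = 0 := by
  rw [hrec, retardedIntegral_eq_zero_of_le (fun s hs => by rw [hga s hs, zero_mul]) ht, neg_zero]

theorem tsum_iterate_eq_of_le (hga : ∀ s < a, g s = 0)
    (hrec : ∀ n t, φ (n + 1) t = -retardedIntegral (fun s => g s * φ n s) t)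
    {t : ℝ} (ht : t ≤ a) : ∑' n, φ n t = φ 0 t :=
  tsum_eq_single 0 fun n hn => by
    obtain ⟨m, rfl⟩ := Nat.exists_eq_succ_of_ne_zero hn
    exact iterate_succ_eq_zero_of_le hga hrec m ht

theorem continuous_iterate (hg : Continuous g) (hga : ∀ s < a, g s = 0)
    (hrec : ∀ n t, φ (n + 1) t = -retardedIntegral (fun s => g s * φ n s) t)
    (h0 : Continuous (φ 0)) : ∀ n, Continuous (φ n)
  | 0 => h0
  | n + 1 => by
    rw [funext (hrec n)]
    exact (contDiff_two_retardedIntegral (f := fun s => g s * φ n s)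
      (hg.mul (continuous_iterate hg hga hrec h0 n))
      fun s hs => by rw [hga s hs, zero_mul]).continuous.neg

theorem abs_iterate_le (hgM : ∀ s, |g s| ≤ M) (hga : ∀ s < a, g s = 0)
    (hrec : ∀ n t, φ (n + 1) t = -retardedIntegral (fun s => g s * φ n s) t)
    {C T : ℝ} (hC : ∀ t ∈ Icc a T, |φ 0 t| ≤ C) :
    ∀ n, ∀ t ∈ Icc a T, |φ n t| ≤ C * (M * (T - a)) ^ n * (t - a) ^ n / n.factorial
  | 0, t, ht => by simpa using hC t ht
  | n + 1, t, ⟨hat, htT⟩ => by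
    have hM : 0 ≤ M := (abs_nonneg _).trans (hgM a)
    set D := M * (C * (M * (T - a)) ^ n / n.factorial) * (T - a) with hD
    have hbound : ∀ s ∈ Ioc a t, ‖g s * φ n s * (t - s)‖ ≤ D * (s - a) ^ n := by
      intro s ⟨has, hst⟩
      have hφ := abs_iterate_le hgM hga hrec hC n s ⟨has.le, hst.trans htT⟩
      calc ‖g s * φ n s * (t - s)‖ = |g s| * |φ n s| * |t - s| := by
            rw [Real.norm_eq_abs, abs_mul, abs_mul]
        _ ≤ M * (C * (M * (T - a)) ^ n * (s - a) ^ n / n.factorial) * (T - a) := by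
            have hts : |t - s| ≤ T - a := by rw [abs_of_nonneg (by linarith)]; linarith
            exact mul_le_mul (mul_le_mul (hgM s) hφ (abs_nonneg _) hM) hts (abs_nonneg _)
              (mul_nonneg hM ((abs_nonneg _).trans hφ))
        _ = D * (s - a) ^ n := by ring
    have hpow : ∫ s in a..t, (s - a) ^ n = (t - a) ^ (n + 1) / (n + 1) := by
      simp [integral_comp_sub_right (fun x => x ^ n), integral_pow]
    calc |φ (n + 1) t| = ‖∫ s in a..t, g s * φ n s * (t - s)‖ := by
          rw [hrec, retardedIntegral_eq_intervalIntegral fun s hs => by rw [hga s hs, zero_mul],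
            abs_neg, Real.norm_eq_abs]
      _ ≤ ∫ s in a..t, D * (s - a) ^ n :=
          norm_integral_le_of_norm_le hat (ae_of_all _ hbound)
            ((continuous_const.mul
              ((continuous_id.sub continuous_const).pow n)).intervalIntegrable _ _)
      _ = C * (M * (T - a)) ^ (n + 1) * (t - a) ^ (n + 1) / (n + 1).factorial := by
          rw [intervalIntegral.integral_const_mul, hpow, Nat.factorial_succ, hD]
          push_cast
          field_simp
          ring

theorem abs_iterate_le_of_mem_Icc (hgM : ∀ s, |g s| ≤ M) (hga : ∀ s < a, g s = 0)
    (hrec : ∀ n t, φ (n + 1) t = -retardedIntegral (fun s => g s * φ n s) t)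
    {a' C T : ℝ} (ha' : a' ≤ a) (hC : ∀ t ∈ Icc a' T, |φ 0 t| ≤ C) (n : ℕ) {t : ℝ}
    (ht : t ∈ Icc a' T) : |φ n t| ≤ C * (M * (T - a) ^ 2) ^ n / n.factorial := by
  have hM : 0 ≤ M := (abs_nonneg _).trans (hgM a)
  have hC0 : 0 ≤ C := (abs_nonneg _).trans (hC t ht)
  rcases le_or_gt t a with hta | hat
  · cases n with
    | zero => simpa using hC t ht
    | succ n =>
      rw [iterate_succ_eq_zero_of_le hga hrec n hta, abs_zero]
      positivity
  · have hbound := abs_iterate_le hgM hga hrec (fun t ht => hC t ⟨ha'.trans ht.1, ht.2⟩) n t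
      ⟨hat.le, ht.2⟩
    calc |φ n t| ≤ C * (M * (T - a) * (t - a)) ^ n / n.factorial := by
          rwa [mul_pow, ← mul_assoc]
      _ ≤ C * (M * (T - a) ^ 2) ^ n / n.factorial := by
          have hTa : 0 ≤ M * (T - a) := mul_nonneg hM (by linarith [ht.2])
          rw [sq, ← mul_assoc]
          gcongr
          exact ht.2

theorem summable_iterate (hgM : ∀ s, |g s| ≤ M) (hga : ∀ s < a, g s = 0)
    (hrec : ∀ n t, φ (n + 1) t = -retardedIntegral (fun s => g s * φ n s) t)
    (h0 : Continuous (φ 0)) (t : ℝ) : Summable fun n => φ n t := by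
  obtain ⟨C, hC⟩ := (isCompact_Icc (a := min t a) (b := t)).exists_bound_of_continuousOn
    h0.continuousOn
  exact ((Real.summable_pow_div_factorial _).mul_left C).of_norm_bounded fun n =>
    (abs_iterate_le_of_mem_Icc hgM hga hrec (min_le_right t a) hC n
      ⟨min_le_left t a, le_rfl⟩).trans_eq (mul_div_assoc _ _ _)

theorem tendstoLocallyUniformly_sum_iterate (hgM : ∀ s, |g s| ≤ M) (hga : ∀ s < a, g s = 0)
    (hrec : ∀ n t, φ (n + 1) t = -retardedIntegral (fun s => g s * φ n s) t)
    (h0 : Continuous (φ 0)) :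
    TendstoLocallyUniformly (fun N t => ∑ n ∈ Finset.range N, φ n t)
      (fun t => ∑' n, φ n t) atTop := by
  rw [tendstoLocallyUniformly_iff_forall_isCompact]
  intro K hK
  obtain ⟨lo, hlo⟩ := hK.bddBelow
  obtain ⟨hi, hhi⟩ := hK.bddAbove
  obtain ⟨C, hC⟩ := (isCompact_Icc (a := min lo a) (b := hi)).exists_bound_of_continuousOn
    h0.continuousOn
  have hKIcc : K ⊆ Icc (min lo a) hi := fun t ht => ⟨(min_le_left _ _).trans (hlo ht), hhi ht⟩
  exact (tendstoUniformlyOn_tsum_nat ((Real.summable_pow_div_factorial _).mul_left C)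
    fun n t ht => (abs_iterate_le_of_mem_Icc hgM hga hrec (min_le_right lo a) hC n ht).trans_eq
      (mul_div_assoc _ _ _)).mono hKIcc

theorem tsum_iterate_eq (hg : Continuous g) (hgM : ∀ s, |g s| ≤ M) (hga : ∀ s < a, g s = 0)
    (hrec : ∀ n t, φ (n + 1) t = -retardedIntegral (fun s => g s * φ n s) t)
    (h0 : Continuous (φ 0)) (t : ℝ) :
    ∑' n, φ n t = φ 0 t - retardedIntegral (fun s => g s * ∑' n, φ n s) t := by
  have hgΦa : ∀ s < a, g s * ∑' n, φ n s = 0 := fun s hs => by rw [hga s hs, zero_mul]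
  rcases le_or_gt t a with hta | hat
  · rw [tsum_iterate_eq_of_le hga hrec hta, retardedIntegral_eq_zero_of_le hgΦa hta, sub_zero]
  obtain ⟨C, hC⟩ := (isCompact_Icc (a := a) (b := t)).exists_bound_of_continuousOn
    h0.continuousOn
  have hM : 0 ≤ M := (abs_nonneg _).trans (hgM a)
  have hsum : HasSum (fun n => ∫ s in a..t, g s * φ n s * (t - s))
      (∫ s in a..t, g s * (∑' n, φ n s) * (t - s)) := by
    set B : ℕ → ℝ := fun n => M * (C * (M * (t - a) ^ 2) ^ n / n.factorial) * (t - a)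
    have hB : Summable B := by
      simpa only [B, mul_div_assoc] using
        (((Real.summable_pow_div_factorial _).mul_left C).mul_left M).mul_right (t - a)
    have hlim :
        ∀ s, HasSum (fun n => g s * φ n s * (t - s)) (g s * (∑' n, φ n s) * (t - s)) :=
      fun s => ((summable_iterate hgM hga hrec h0 s).hasSum.mul_left (g s)).mul_right (t - s)
    refine hasSum_integral_of_dominated_convergence (fun n _ => B n)
      (fun n => ((hg.mul (continuous_iterate hg hga hrec h0 n)).mul
        (continuous_const.sub continuous_id)).aestronglyMeasurable)
      (fun n => ae_of_all _ fun s hs => ?_) (ae_of_all _ fun _ _ => hB)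
      intervalIntegrable_const (ae_of_all _ fun s _ => hlim s)
    rw [uIoc_of_le hat.le] at hs
    have hφ := abs_iterate_le_of_mem_Icc hgM hga hrec le_rfl hC n ⟨hs.1.le, hs.2⟩
    have hts : |t - s| ≤ t - a := by rw [abs_of_nonneg (by linarith [hs.2])]; linarith [hs.1]
    rw [Real.norm_eq_abs, abs_mul, abs_mul]
    exact mul_le_mul (mul_le_mul (hgM s) hφ (abs_nonneg _) hM) hts (abs_nonneg _)
      (mul_nonneg hM ((abs_nonneg _).trans hφ))
  have hsucc : (fun n => φ (n + 1) t) = fun n => -∫ s in a..t, g s * φ n s * (t - s) :=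
    funext fun n => by
      rw [hrec, retardedIntegral_eq_intervalIntegral fun s hs => by rw [hga s hs, zero_mul]]
  rw [(summable_iterate hgM hga hrec h0 t).tsum_eq_zero_add, hsucc, hsum.neg.tsum_eq,
    retardedIntegral_eq_intervalIntegral hgΦa, sub_eq_add_neg]

end VolterraIteration

/-- Convergence of the Volterra/Yang–Feldman iteration for the retarded equation
`φ = φ₀ − R(g·φ)`: the series Σ φₙ converges uniformly on compacts, and its sum is a C²
solution of `φ'' + gφ = 0` agreeing with the affine free solution `φ₀` for `t ≤ a`. -/
theorem stmt_6 (g : ℝ → ℝ) (hg : Continuous g) (a b : ℝ)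
    (hsupp : tsupport g ⊆ Set.Icc a b)
    (c d : ℝ) (φ₀ : ℝ → ℝ) (hφ₀ : ∀ t, φ₀ t = c + d * t)
    (φ : ℕ → ℝ → ℝ) (h0 : φ 0 = φ₀)
    (hrec : ∀ n t, φ (n + 1) t =
      -∫ s : ℝ, g s * φ n s * (if 0 ≤ t - s then t - s else 0)) :
    (∀ K : Set ℝ, IsCompact K →
      TendstoUniformlyOn (fun N t => ∑ n ∈ Finset.range N, φ n t)
        (fun t => ∑' n, φ n t) atTop K) ∧
    ContDiff ℝ 2 (fun t => ∑' n, φ n t) ∧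
    (∀ t, deriv (deriv fun t' => ∑' n, φ n t') t + g t * ∑' n, φ n t = 0) ∧
    (∀ t, t ≤ a → (∑' n, φ n t) = φ₀ t) := by
  obtain ⟨M, hgM⟩ := hg.bounded_above_of_compact_support
    (isCompact_Icc.of_isClosed_subset (isClosed_tsupport g) hsupp)
  have hga : ∀ s < a, g s = 0 := fun s hs =>
    image_eq_zero_of_notMem_tsupport fun h => (hsupp h).1.not_gt hs
  have hφ0 : Continuous (φ 0) := by
    rw [h0, funext hφ₀]
    fun_prop
  have hloc := tendstoLocallyUniformly_sum_iterate hgM hga hrec hφ0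
  have hgΦ : Continuous fun s => g s * ∑' n, φ n s :=
    hg.mul (hloc.continuous (Eventually.of_forall fun _ =>
      continuous_finsetSum _ fun n _ => continuous_iterate hg hga hrec hφ0 n).frequently)
  have hgΦa : ∀ s < a, g s * ∑' n, φ n s = 0 := fun s hs => by rw [hga s hs, zero_mul]
  have hΦ : (fun t => ∑' n, φ n t) =
      fun t => c + d * t - retardedIntegral (fun s => g s * ∑' n, φ n s) t :=
    funext fun t => by rw [tsum_iterate_eq hg hgM hga hrec hφ0, h0, hφ₀]
  refine ⟨tendstoLocallyUniformly_iff_forall_isCompact.1 hloc, ?_, fun t => ?_,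
    fun t ht => h0 ▸ tsum_iterate_eq_of_le hga hrec ht⟩
  · rw [hΦ]
    exact (contDiff_const.add (contDiff_const.mul contDiff_id)).sub
      (contDiff_two_retardedIntegral hgΦ hgΦa)
  · have h2 := deriv_deriv_affine_sub_retardedIntegral hgΦ hgΦa c d t
    rw [← hΦ] at h2
    rw [h2, neg_add_cancel]
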